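/- Let n ≥ 2, let K be a compact subset of ℝⁿ, and let f : K → ℝᵐ be continuous. For every ε > 0 there exists a radial neural network whose hidden layers all use the Step-ReLU activation, with 2·M(f, K, ε/2) hidden layers whose widths are all equal to max(n, m) (input width n, output width m), whose feedforward function F : ℝⁿ → ℝᵐ satisfies |F(x) − f(x)| < ε for all x ∈ K. -/

import Mathlib

open scoped Classical
open Metric Set

noncomputable section

abbrev Euc (n : ℕ) := EuclideanSpace ℝ (Fin n)

def mulVecE {m n : ℕ} (W : Matrix (Fin m) (Fin n) ℝ) (v : Euc n) : Euc m :=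
  WithLp.toLp 2 (fun j => ∑ k, W j k * v k)

/-- Step-ReLU on ℝⁿ: the radial rescaling function sending v to v if ‖v‖ ≥ 1
and to 0 if ‖v‖ < 1. -/
def stepReLU {n : ℕ} (v : Euc n) : Euc n := if 1 ≤ ‖v‖ then v else 0

/-- N witnesses the covering property for f on K at scale ε: there are points
c₁, …, c_N ∈ K and radii r₁, …, r_N ∈ (0,1) such that the balls B_{rᵢ}(cᵢ)
cover K and f(B_{rᵢ}(cᵢ) ∩ K) ⊆ B_ε(f cᵢ) for all i. -/
def IsCoverSize {n m : ℕ} (f : Euc n → Euc m) (K : Set (Euc n)) (ε : ℝ) (N : ℕ) : Prop :=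
  ∃ (c : Fin N → Euc n) (r : Fin N → ℝ),
    (∀ i, c i ∈ K) ∧ (∀ i, r i ∈ Set.Ioo (0:ℝ) 1) ∧
    (K ⊆ ⋃ i, Metric.ball (c i) (r i)) ∧
    (∀ i, f '' (Metric.ball (c i) (r i) ∩ K) ⊆ Metric.ball (f (c i)) ε)

/-- N(f, K, ε): the minimal N as in IsCoverSize. -/
def coverNum {n m : ℕ} (f : Euc n → Euc m) (K : Set (Euc n)) (ε : ℝ) : ℕ :=
  sInf {N | IsCoverSize f K ε N}

/-- M witnesses the separated covering property for f on K at scale ε: as in the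
covering property, with the additional condition that ‖cᵢ − cⱼ‖ ≥ rᵢ for i ≠ j. -/
def IsPackedCoverSize {n m : ℕ} (f : Euc n → Euc m) (K : Set (Euc n)) (ε : ℝ) (M : ℕ) : Prop :=
  ∃ (c : Fin M → Euc n) (r : Fin M → ℝ),
    (∀ i, c i ∈ K) ∧ (∀ i, r i ∈ Set.Ioo (0:ℝ) 1) ∧
    (K ⊆ ⋃ i, Metric.ball (c i) (r i)) ∧
    (∀ i, f '' (Metric.ball (c i) (r i) ∩ K) ⊆ Metric.ball (f (c i)) ε) ∧
    (∀ i j, i ≠ j → r i ≤ dist (c i) (c j))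

/-- M(f, K, ε): the minimal M as in IsPackedCoverSize. -/
def packNum {n m : ℕ} (f : Euc n → Euc m) (K : Set (Euc n)) (ε : ℝ) : ℕ :=
  sInf {M | IsPackedCoverSize f K ε M}

/-- Iterating hidden layers of constant width k with Step-ReLU activations:
hiddenStack k W b j maps the output of the first hidden layer through j further
hidden layers. -/
def hiddenStack (k : ℕ) (W : ℕ → Matrix (Fin k) (Fin k) ℝ) (b : ℕ → Euc k) :
    ℕ → Euc k → Euc k
  | 0 => fun v => v
  | (j+1) => fun v => stepReLU (mulVecE (W j) (hiddenStack k W b j v) + b j)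

/-- The feedforward function of a radial neural network with input width n, exactly N
hidden layers all of width k with Step-ReLU activations, and a final affine layer into
ℝᵐ (with identity activation, a radial rescaling function).  For N = 0 the network is
the single affine layer x ↦ A₀ x + c₀; for N ≥ 1 it is
x ↦ A (ρ(W_{N-1} ⋯ ρ(W₀ x + b₀) ⋯ + b_{N-1})) + c. -/
def constNet (n k m N : ℕ)
    (A₀ : Matrix (Fin m) (Fin n) ℝ) (c₀ : Euc m)
    (W₀ : Matrix (Fin k) (Fin n) ℝ) (b₀ : Euc k)
    (W : ℕ → Matrix (Fin k) (Fin k) ℝ) (b : ℕ → Euc k)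
    (A : Matrix (Fin m) (Fin k) ℝ) (c : Euc m) : Euc n → Euc m :=
  match N with
  | 0 => fun x => mulVecE A₀ x + c₀
  | (N+1) => fun x =>
      mulVecE A (hiddenStack k W b N (stepReLU (mulVecE W₀ x + b₀))) + c

/-!
Fix a packed cover `(cᵢ, rᵢ)` of `K` with `M = M(f, K, ε/2)` balls. Conjugating Step-ReLU by an
affine bijection `v ↦ T (v - w)` gives a layer that collapses the ellipsoid `‖T (v - w)‖ < 1` to its
centre `w` and is the identity elsewhere. With round balls, `M` such layers send every `x ∈ K` to
the centre `cⱼ` of a ball containing it: a centre, once reached, is never moved again because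
`rⱼ ≤ ‖cᵢ - cⱼ‖`. With thin ellipsoids, `M` further layers move the distinct centres one at a time
to within `ε/2` of `f cⱼ`, each step fixing all other relevant points; in width at least `2` the
new position can be chosen off every line through the moving point and another relevant point,
which is what makes the thin ellipsoid exist. Embedding `ℝⁿ` and `ℝᵐ` isometrically into width
`max n m`, the output is within `ε/2 + ε/2` of `f x`.
-/

open Function MeasureTheory

lemma exists_linearIsometry_of_finrank_le {𝕜 E F : Type*} [RCLike 𝕜] [NormedAddCommGroup E]
    [InnerProductSpace 𝕜 E] [FiniteDimensional 𝕜 E] [NormedAddCommGroup F]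
    [InnerProductSpace 𝕜 F] [FiniteDimensional 𝕜 F] (h : Module.finrank 𝕜 E ≤ Module.finrank 𝕜 F) :
    Nonempty (E →ₗᵢ[𝕜] F) := by
  let bE := stdOrthonormalBasis 𝕜 E
  let bF := stdOrthonormalBasis 𝕜 F
  refine ⟨(bE.toBasis.constr 𝕜 fun i => bF (Fin.castLE h i)).isometryOfOrthonormal
    (v := bE.toBasis) (by simp [bE.orthonormal]) ?_⟩
  convert bF.orthonormal.comp _ (Fin.castLE_injective h) using 1
  ext1 i
  simp

lemma LinearIsometry.norm_adjoint_apply_sub_le {𝕜 E F : Type*} [RCLike 𝕜] [NormedAddCommGroup E]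
    [InnerProductSpace 𝕜 E] [CompleteSpace E] [NormedAddCommGroup F] [InnerProductSpace 𝕜 F]
    [CompleteSpace F] (ι : E →ₗᵢ[𝕜] F) (x : E) (y : F) :
    ‖ι.toContinuousLinearMap.adjoint y - x‖ ≤ ‖y - ι x‖ := by
  have hx : ι.toContinuousLinearMap.adjoint (ι x) = x :=
    congrArg (fun T : E →L[𝕜] E => T x) ι.adjoint_comp_self
  calc ‖ι.toContinuousLinearMap.adjoint y - x‖ = ‖ι.toContinuousLinearMap.adjoint (y - ι x)‖ := by
        rw [map_sub, hx]
    _ ≤ ‖ι.toContinuousLinearMap.adjoint‖ * ‖y - ι x‖ := ContinuousLinearMap.le_opNorm _ _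
    _ ≤ ‖y - ι x‖ := by
        rw [LinearIsometryEquiv.norm_map]
        exact mul_le_of_le_one_left (norm_nonneg _) ι.norm_toContinuousLinearMap_le

lemma exists_linearEquiv_norm_lt_one_le_norm {E : Type*} [NormedAddCommGroup E]
    [InnerProductSpace ℝ E] [FiniteDimensional ℝ E] (u : E) (Z : Finset E)
    (hZ : ∀ z ∈ Z, z ∉ ℝ ∙ u) : ∃ T : E ≃ₗ[ℝ] E, ‖T u‖ < 1 ∧ ∀ z ∈ Z, 1 ≤ ‖T z‖ := by
  set P := (ℝ ∙ u)ᗮ.starProjection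
  have hPP : ∀ v, P (P v) = P v := fun v =>
    Submodule.starProjection_eq_self_iff.mpr (Submodule.starProjection_apply_mem _ v)
  have hPz : ∀ z ∈ Z, P z ≠ 0 := fun z hz => by
    rw [Ne, Submodule.starProjection_apply_eq_zero_iff, Submodule.orthogonal_orthogonal]
    exact hZ z hz
  set α : ℝ := (‖u‖ + 1)⁻¹
  set β : ℝ := ∑ z ∈ Z, ‖P z‖⁻¹
  have hα : 0 < α := by positivity
  -- `β` is large enough that the ellipsoid `‖T v‖ < 1` is too thin across `ℝ ∙ u` to reach any `z`
  set T : E →ₗ[ℝ] E := α • LinearMap.id + β • P.toLinearMap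
  have hPT : ∀ v, P (T v) = (α + β) • P v := fun v => by
    simp [T, hPP, add_smul]
  have hT : Injective T := by
    rw [← LinearMap.ker_eq_bot, LinearMap.ker_eq_bot']
    intro v hv
    have hPv : P v = 0 := by
      simpa [hv, (show 0 < α + β by positivity).ne'] using (hPT v).symm
    simpa [T, hPv, hα.ne'] using hv
  refine ⟨LinearEquiv.ofInjectiveEndo T hT, ?_, fun z hz => ?_⟩
  · have hPu : P u = 0 :=
      Submodule.starProjection_orthogonal_apply_eq_zero (Submodule.mem_span_singleton_self u)
    simp only [LinearEquiv.coe_ofInjectiveEndo, T, LinearMap.add_apply, LinearMap.smul_apply,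
      ContinuousLinearMap.coe_coe, hPu, smul_zero, add_zero, LinearMap.id_apply, norm_smul,
      Real.norm_of_nonneg hα.le, α]
    rw [inv_mul_lt_one₀ (by positivity)]
    linarith
  · have hβ : ‖P z‖⁻¹ ≤ β :=
      Finset.single_le_sum (f := fun z => ‖P z‖⁻¹) (fun _ _ => by positivity) hz
    calc 1 = ‖P z‖⁻¹ * ‖P z‖ := (inv_mul_cancel₀ (norm_ne_zero_iff.mpr (hPz z hz))).symm
      _ ≤ (α + β) * ‖P z‖ := by gcongr; linarith
      _ = ‖P (T z)‖ := by
        rw [hPT, norm_smul, Real.norm_of_nonneg (by positivity)]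
      _ ≤ ‖T z‖ := Submodule.norm_starProjection_apply_le _ _

lemma IsCompact.finite_of_isSeparated_dist_lt {E : Type*} [PseudoMetricSpace E] {K S : Set E}
    (hK : IsCompact K) (hSK : S ⊆ K) {r : ℝ} (hr : 0 < r)
    (hS : SetRel.IsSeparated {p : E × E | dist p.1 p.2 < r} S) : S.Finite := by
  obtain ⟨t, -, ht, hKt⟩ := finite_cover_balls_of_compact hK (half_pos hr)
  have hc : ∀ x ∈ S, ∃ c ∈ t, x ∈ ball c (r / 2) := fun x hx => by
    simpa only [mem_iUnion₂, exists_prop] using hKt (hSK hx)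
  choose! c hct hxc using hc
  refine ht.of_injOn hct fun x hx y hy hxy => ?_
  by_contra hne
  refine hS hx hy hne ?_
  calc dist x y ≤ dist x (c x) + dist y (c x) := dist_triangle_right _ _ _
    _ < r / 2 + r / 2 := add_lt_add (hxc x hx) (hxy ▸ hxc y hy)
    _ = r := add_halves r

lemma exists_isPackedCoverSize {n m : ℕ} {K : Set (Euc n)} (hK : IsCompact K)
    {f : Euc n → Euc m} (hf : ContinuousOn f K) {ε : ℝ} (hε : 0 < ε) :
    ∃ M, IsPackedCoverSize f K ε M := by
  obtain ⟨δ, hδ, hfδ⟩ := Metric.uniformContinuousOn_iff.mp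
    (hK.uniformContinuousOn_of_continuous hf) ε hε
  set r := min (δ / 2) (1 / 2)
  have hr : 0 < r := lt_min (half_pos hδ) one_half_pos
  have hr1 : r < 1 := (min_le_right _ _).trans_lt one_half_lt_one
  have hrδ : r ≤ δ := (min_le_left _ _).trans (half_le_self hδ.le)
  let U : SetRel (Euc n) (Euc n) := {p | dist p.1 p.2 < r}
  have : U.IsRefl := ⟨fun x => by simp [U, hr]⟩
  have : U.IsSymm := ⟨fun x y h => by simpa [U, dist_comm] using h⟩
  obtain ⟨S, -, hS⟩ := zorn_subset_nonempty {S | S ⊆ K ∧ U.IsSeparated S}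
    (fun C hC hchain _ => ⟨⋃₀ C, ⟨sUnion_subset fun S hS => (hC hS).1,
      (pairwise_sUnion hchain.directedOn).mpr fun S hS => (hC hS).2⟩,
      fun _ => subset_sUnion_of_mem⟩) ∅ ⟨empty_subset K, SetRel.IsSeparated.empty⟩
  have hcover : SetRel.IsCover U K S := SetRel.IsCover.of_maximal_isSeparated hS
  obtain ⟨M, c, hc, rfl⟩ := (hK.finite_of_isSeparated_dist_lt hS.1.1 hr hS.1.2).fin_param
  refine ⟨M, c, fun _ => r, fun i => hS.1.1 (mem_range_self i), fun _ => ⟨hr, hr1⟩,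
    fun x hx => ?_, ?_, fun i j hij => not_lt.mp (hS.1.2 (mem_range_self i) (mem_range_self j)
      (hc.ne hij))⟩
  · obtain ⟨_, ⟨i, rfl⟩, hxi⟩ := hcover hx
    exact mem_iUnion.mpr ⟨i, hxi⟩
  · rintro i _ ⟨x, ⟨hxi, hx⟩, rfl⟩
    exact hfδ x hx _ (hS.1.1 (mem_range_self i)) ((mem_ball.mp hxi).trans_le hrδ)

lemma isPackedCoverSize_packNum {n m : ℕ} {K : Set (Euc n)} (hK : IsCompact K)
    {f : Euc n → Euc m} (hf : ContinuousOn f K) {ε : ℝ} (hε : 0 < ε) :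
    IsPackedCoverSize f K ε (packNum f K ε) :=
  Nat.sInf_mem (exists_isPackedCoverSize hK hf hε)

lemma mulVecE_eq_toEuclideanLin {a b : ℕ} (W : Matrix (Fin b) (Fin a) ℝ) (v : Euc a) :
    mulVecE W v = Matrix.toEuclideanLin W v := rfl

lemma AffineMap.exists_mulVecE_add {a b : ℕ} (A : Euc a →ᵃ[ℝ] Euc b) :
    ∃ (W : Matrix (Fin b) (Fin a) ℝ) (c : Euc b), ∀ v, A v = mulVecE W v + c :=
  ⟨Matrix.toEuclideanLin.symm A.linear, A 0, fun v => by
    rw [mulVecE_eq_toEuclideanLin, LinearEquiv.apply_symm_apply]; exact congrFun A.decomp v⟩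

lemma hiddenStack_succ {k : ℕ} (W : ℕ → Matrix (Fin k) (Fin k) ℝ) (b : ℕ → Euc k) (N : ℕ)
    (v : Euc k) :
    hiddenStack k W b (N + 1) v =
      hiddenStack k (fun j => W (j + 1)) (fun j => b (j + 1)) N
        (stepReLU (mulVecE (W 0) v + b 0)) := by
  induction N with
  | zero => rfl
  | succ N ih => exact congrArg (fun u => stepReLU (mulVecE (W (N + 1)) u + b (N + 1))) ih

inductive IsStepReLUNet (k : ℕ) : ℕ → (Euc k → Euc k) → Prop
  | affine (A : Euc k →ᵃ[ℝ] Euc k) : IsStepReLUNet k 0 A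
  | comp_stepReLU {N : ℕ} {G : Euc k → Euc k} (hG : IsStepReLUNet k N G)
      (A : Euc k →ᵃ[ℝ] Euc k) : IsStepReLUNet k (N + 1) (G ∘ stepReLU ∘ A)

namespace IsStepReLUNet

variable {k N N' : ℕ} {G H : Euc k → Euc k}

lemma comp_affine (hG : IsStepReLUNet k N G) (A : Euc k →ᵃ[ℝ] Euc k) :
    IsStepReLUNet k N (G ∘ A) := by
  induction hG with
  | affine B => exact affine (B.comp A)
  | comp_stepReLU hG B _ => exact comp_stepReLU hG (B.comp A)

lemma comp (hG : IsStepReLUNet k N G) (hH : IsStepReLUNet k N' H) :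
    IsStepReLUNet k (N + N') (G ∘ H) := by
  induction hH with
  | affine A => exact hG.comp_affine A
  | comp_stepReLU _ A ih => exact comp_stepReLU ih A

lemma exists_hiddenStack (hG : IsStepReLUNet k N G) :
    ∃ (W : ℕ → Matrix (Fin k) (Fin k) ℝ) (b : ℕ → Euc k) (A : Euc k →ᵃ[ℝ] Euc k),
      G = A ∘ hiddenStack k W b N := by
  induction hG with
  | affine A => exact ⟨0, 0, A, rfl⟩
  | comp_stepReLU _ B ih =>
    obtain ⟨W, b, A, rfl⟩ := ih
    obtain ⟨W₀, b₀, hB⟩ := B.exists_mulVecE_add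
    refine ⟨fun j => Nat.casesOn j W₀ W, fun j => Nat.casesOn j b₀ b, A, funext fun v => ?_⟩
    simp only [comp_apply, hiddenStack_succ, hB]
    rfl

lemma exists_constNet_eq {n m : ℕ} (hG : IsStepReLUNet k N G)
    (ι : Euc n →ᵃ[ℝ] Euc k) (π : Euc k →ᵃ[ℝ] Euc m) :
    ∃ (A₀ : Matrix (Fin m) (Fin n) ℝ) (c₀ : Euc m)
      (W₀ : Matrix (Fin k) (Fin n) ℝ) (b₀ : Euc k)
      (W : ℕ → Matrix (Fin k) (Fin k) ℝ) (b : ℕ → Euc k)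
      (A : Matrix (Fin m) (Fin k) ℝ) (c : Euc m),
      ∀ x, constNet n k m N A₀ c₀ W₀ b₀ W b A c x = π (G (ι x)) := by
  cases hG with
  | affine B =>
    obtain ⟨A₀, c₀, h⟩ := (π.comp (B.comp ι)).exists_mulVecE_add
    exact ⟨A₀, c₀, 0, 0, 0, 0, 0, 0, fun x => (h x).symm⟩
  | comp_stepReLU hG A₁ =>
    obtain ⟨W, b, B, rfl⟩ := hG.exists_hiddenStack
    obtain ⟨W₀, b₀, h₀⟩ := (A₁.comp ι).exists_mulVecE_add
    obtain ⟨A, c, hA⟩ := (π.comp B).exists_mulVecE_add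
    refine ⟨0, 0, W₀, b₀, W, b, A, c, fun x => ?_⟩
    simp only [constNet, ← hA, ← h₀]
    rfl

end IsStepReLUNet

lemma isStepReLUNet_collapse {k : ℕ} (T : Euc k ≃ₗ[ℝ] Euc k) (w : Euc k) :
    IsStepReLUNet k 1 (fun v => if ‖T (v - w)‖ < 1 then w else v) := by
  let e : Euc k ≃ᵃ[ℝ] Euc k := (AffineEquiv.vaddConst ℝ w).symm.trans T.toAffineEquiv
  have he : ∀ v, e v = T (v - w) := fun v => rfl
  convert (IsStepReLUNet.affine e.symm.toAffineMap).comp_stepReLU e.toAffineMap using 1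
  funext v
  show _ = e.symm (stepReLU (e v))
  rw [stepReLU, he]
  split_ifs with h₁ h₂ h₂
  · exact absurd h₂ h₁.not_ge
  · rw [eq_comm, e.symm_apply_eq, he, sub_self, map_zero]
  · rw [← he, e.symm_apply_apply]
  · exact absurd (not_lt.mp h₁) h₂

lemma isStepReLUNet_collapse_ball {k : ℕ} (c : Euc k) {r : ℝ} (hr : 0 < r) :
    IsStepReLUNet k 1 (fun v => if dist v c < r then c else v) := by
  let T := LinearEquiv.smulOfNeZero ℝ (Euc k) r⁻¹ (inv_ne_zero hr.ne')
  have hT : ∀ v, ‖T (v - c)‖ < 1 ↔ dist v c < r := fun v => by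
    rw [LinearEquiv.smulOfNeZero_apply, norm_smul, norm_inv, Real.norm_of_nonneg hr.le,
      inv_mul_lt_iff₀ hr, mul_one, dist_eq_norm]
  simpa only [hT] using isStepReLUNet_collapse T c

lemma exists_isStepReLUNet_snap_to_centers {k : ℕ} :
    ∀ {N : ℕ} (c : Fin N → Euc k) (r : Fin N → ℝ), (∀ i, 0 < r i) →
      (∀ i j, i ≠ j → r i ≤ dist (c i) (c j)) →
      ∃ G, IsStepReLUNet k N G ∧ (∀ x, (∀ i, r i ≤ dist x (c i)) → G x = x) ∧
        ∀ x i, dist x (c i) < r i → ∃ j, dist x (c j) < r j ∧ G x = c j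
  | 0, _, _, _, _ => ⟨_, .affine (AffineMap.id ℝ _), fun _ _ => rfl, fun _ i => i.elim0⟩
  | N + 1, c, r, hr, hsep => by
    obtain ⟨G, hG, hfix, hsnap⟩ := exists_isStepReLUNet_snap_to_centers (c ∘ Fin.succ)
      (r ∘ Fin.succ) (fun i => hr _) fun i j hij => hsep _ _ (Fin.succ_injective _ |>.ne hij)
    refine ⟨_, hG.comp (isStepReLUNet_collapse_ball (c 0) (hr 0)), fun x hx => ?_, fun x i hi => ?_⟩
    · simp only [Function.comp_apply, if_neg (hx 0).not_gt]
      exact hfix x fun i => hx i.succ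
    · by_cases h₀ : dist x (c 0) < r 0
      · refine ⟨0, h₀, ?_⟩
        simp only [Function.comp_apply, if_pos h₀]
        exact hfix _ fun j => (hsep _ _ (Fin.succ_ne_zero j)).trans_eq (dist_comm _ _)
      · simp only [Function.comp_apply, if_neg h₀]
        cases i using Fin.cases with
        | zero => exact absurd hi h₀
        | succ i =>
          obtain ⟨j, hj, hGx⟩ := hsnap x i hi
          exact ⟨j.succ, hj, hGx⟩

lemma exists_mem_ball_sub_notMem_span {k : ℕ} (hk : 2 ≤ k) (a u : Euc k) {ρ : ℝ} (hρ : 0 < ρ)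
    (Z : Finset (Euc k)) (haZ : a ∉ Z) : ∃ w ∈ ball u ρ, ∀ z ∈ Z, z - w ∉ ℝ ∙ (a - w) := by
  -- a bad `w` lies on a line through `a` and a point of `Z`, and lines are null sets when `k ≥ 2`
  let L : Euc k → AffineSubspace ℝ (Euc k) := fun z => AffineSubspace.mk' a (ℝ ∙ (z - a))
  have hL : ∀ z, volume (L z : Set (Euc k)) = 0 := fun z => by
    refine Measure.addHaar_affineSubspace _ _ fun htop => ?_
    have hdir : ℝ ∙ (z - a) = ⊤ := by simpa [L] using congrArg AffineSubspace.direction htop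
    have h := finrank_span_le_card (R := ℝ) ({z - a} : Set (Euc k))
    rw [hdir, finrank_top, finrank_euclideanSpace_fin] at h
    simp only [Set.toFinset_singleton, Finset.card_singleton] at h
    omega
  have hbad : ∀ z ∈ Z, ∀ w, z - w ∈ ℝ ∙ (a - w) → w ∈ L z := by
    intro z hz w hw
    obtain ⟨t, ht⟩ := Submodule.mem_span_singleton.mp hw
    have ht1 : 1 - t ≠ 0 := fun h => by
      rw [← sub_eq_zero.mp h, one_smul, sub_left_inj] at ht
      exact haZ (ht ▸ hz)
    rw [AffineSubspace.mem_mk', vsub_eq_sub, Submodule.mem_span_singleton]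
    refine ⟨(1 - t)⁻¹, ?_⟩
    rw [inv_smul_eq_iff₀ ht1]
    linear_combination (norm := module) -ht
  by_contra! h
  have hsub : ball u ρ ⊆ ⋃ z ∈ Z, (L z : Set (Euc k)) := fun w hw => by
    obtain ⟨z, hz, hzw⟩ := h w hw
    exact mem_biUnion hz (hbad z hz w hzw)
  exact (measure_ball_pos volume u hρ).ne'
    (measure_mono_null hsub ((measure_biUnion_null_iff Z.countable_toSet).mpr fun z _ => hL z))

lemma exists_isStepReLUNet_move_point {k : ℕ} (a w : Euc k) (Z : Finset (Euc k))
    (hZ : ∀ z ∈ Z, z - w ∉ ℝ ∙ (a - w)) :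
    ∃ G, IsStepReLUNet k 1 G ∧ G a = w ∧ ∀ z ∈ Z, G z = z := by
  obtain ⟨T, hTa, hTZ⟩ :=
    exists_linearEquiv_norm_lt_one_le_norm (a - w) (Z.image (· - w)) (by simpa using hZ)
  exact ⟨_, isStepReLUNet_collapse T w, if_pos hTa,
    fun z hz => if_neg (hTZ _ (Finset.mem_image_of_mem _ hz)).not_gt⟩

lemma exists_isStepReLUNet_move_points {k : ℕ} (hk : 2 ≤ k) {ρ : ℝ} (hρ : 0 < ρ) :
    ∀ {N : ℕ} (x : Fin N → Euc k), Injective x → ∀ (u : Fin N → Euc k) (Y : Finset (Euc k)),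
      (∀ i, x i ∉ Y) →
      ∃ G, IsStepReLUNet k N G ∧ (∀ i, dist (G (x i)) (u i) < ρ) ∧ ∀ y ∈ Y, G y = y
  | 0, _, _, _, _, _ => ⟨_, .affine (AffineMap.id ℝ _), fun i => i.elim0, fun _ _ => rfl⟩
  | N + 1, x, hx, u, Y, hY => by
    set Z := Y ∪ Finset.univ.image (x ∘ Fin.succ)
    have hxZ : ∀ i : Fin N, x i.succ ∈ Z := fun i => Finset.mem_union_right _ (by simp)
    have haZ : x 0 ∉ Z := by simp [Z, hY, hx.eq_iff]
    obtain ⟨w, hw, hwZ⟩ := exists_mem_ball_sub_notMem_span hk (x 0) (u 0) hρ Z haZ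
    obtain ⟨G₀, hG₀, hG₀a, hG₀Z⟩ := exists_isStepReLUNet_move_point (x 0) w Z hwZ
    have hxw : ∀ i : Fin N, x i.succ ≠ w := fun i h => hwZ _ (hxZ i) (by simp [h])
    obtain ⟨G, hG, hGx, hGY⟩ := exists_isStepReLUNet_move_points hk hρ (x ∘ Fin.succ)
      (hx.comp (Fin.succ_injective _)) (u ∘ Fin.succ) (insert w Y)
      fun i => by simp [hxw i, hY]
    refine ⟨G ∘ G₀, hG.comp hG₀, fun i => ?_, fun y hy => ?_⟩
    · cases i using Fin.cases with
      | zero => simpa [hG₀a, hGY w (Finset.mem_insert_self _ _)] using hw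
      | succ i => simpa [hG₀Z _ (hxZ i)] using hGx i
    · simp [hG₀Z y (Finset.mem_union_left _ hy), hGY y (Finset.mem_insert_of_mem hy)]

lemma IsPackedCoverSize.exists_isStepReLUNet_dist_lt {n m k M : ℕ} {f : Euc n → Euc m}
    {K : Set (Euc n)} {ε : ℝ} (h : IsPackedCoverSize f K ε M) (hk : 2 ≤ k)
    (ι : Euc n →ₗᵢ[ℝ] Euc k) (κ : Euc m →ₗᵢ[ℝ] Euc k) {ρ : ℝ} (hρ : 0 < ρ) :
    ∃ G, IsStepReLUNet k (2 * M) G ∧ ∀ x ∈ K, dist (G (ι x)) (κ (f x)) < ρ + ε := by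
  obtain ⟨c, r, -, hr, hcover, hfc, hsep⟩ := h
  obtain ⟨G₁, hG₁, -, hsnap⟩ := exists_isStepReLUNet_snap_to_centers (ι ∘ c) r
    (fun i => (hr i).1) fun i j hij => by simpa using hsep i j hij
  have hc : Injective c := fun i j hij => by_contra fun hne =>
    (hr i).1.not_ge (by simpa [hij] using hsep i j hne)
  obtain ⟨G₂, hG₂, hmove, -⟩ := exists_isStepReLUNet_move_points hk hρ (ι ∘ c)
    (ι.injective.comp hc) (κ ∘ f ∘ c) ∅ (by simp)
  refine ⟨G₂ ∘ G₁, two_mul M ▸ hG₂.comp hG₁, fun x hx => ?_⟩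
  obtain ⟨i, hi⟩ := mem_iUnion.mp (hcover hx)
  obtain ⟨j, hj, hG₁x⟩ := hsnap (ι x) i (by simpa using hi)
  have hfx : dist (f x) (f (c j)) < ε := hfc j ⟨x, ⟨by simpa using hj, hx⟩, rfl⟩
  calc dist (G₂ (G₁ (ι x))) (κ (f x))
      ≤ dist (G₂ (ι (c j))) (κ (f (c j))) + dist (κ (f (c j))) (κ (f x)) := by
        rw [hG₁x]
        exact dist_triangle _ _ _
    _ < ρ + ε := add_lt_add (hmove j) (by simpa [dist_comm] using hfx)

/-- Let n ≥ 2, K ⊆ ℝⁿ compact, f : K → ℝᵐ continuous.  For every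
ε > 0 there is a radial neural network with 2·M(f, K, ε/2) hidden layers all of width
max(n, m), Step-ReLU activations at all hidden layers, and a final affine layer into
ℝᵐ, whose feedforward function F satisfies ‖F x − f x‖ < ε for all x ∈ K. -/
theorem universal_approximation_max_width {n m : ℕ} (hn : 2 ≤ n)
    (K : Set (Euc n)) (hK : IsCompact K)
    (f : Euc n → Euc m) (hf : ContinuousOn f K) (ε : ℝ) (hε : 0 < ε) :
    ∃ (A₀ : Matrix (Fin m) (Fin n) ℝ) (c₀ : Euc m)
      (W₀ : Matrix (Fin (max n m)) (Fin n) ℝ) (b₀ : Euc (max n m))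
      (W : ℕ → Matrix (Fin (max n m)) (Fin (max n m)) ℝ) (b : ℕ → Euc (max n m))
      (A : Matrix (Fin m) (Fin (max n m)) ℝ) (c : Euc m),
      ∀ x ∈ K,
        ‖constNet n (max n m) m (2 * packNum f K (ε / 2)) A₀ c₀ W₀ b₀ W b A c x - f x‖ < ε := by
  obtain ⟨ι⟩ := exists_linearIsometry_of_finrank_le (𝕜 := ℝ) (E := Euc n) (F := Euc (max n m))
    (by simp)
  obtain ⟨κ⟩ := exists_linearIsometry_of_finrank_le (𝕜 := ℝ) (E := Euc m) (F := Euc (max n m))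
    (by simp)
  obtain ⟨G, hG, hGf⟩ := IsPackedCoverSize.exists_isStepReLUNet_dist_lt
    (isPackedCoverSize_packNum hK hf (half_pos hε)) (hn.trans (le_max_left n m)) ι κ (half_pos hε)
  obtain ⟨A₀, c₀, W₀, b₀, W, b, A, c, hnet⟩ := hG.exists_constNet_eq ι.toLinearMap.toAffineMap
    κ.toContinuousLinearMap.adjoint.toLinearMap.toAffineMap
  refine ⟨A₀, c₀, W₀, b₀, W, b, A, c, fun x hx => ?_⟩
  rw [hnet]
  calc _ ≤ ‖G (ι x) - κ (f x)‖ := κ.norm_adjoint_apply_sub_le _ _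
    _ < ε / 2 + ε / 2 := by simpa [dist_eq_norm] using hGf x hx
    _ = ε := add_halves ε
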